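/- With ℋ as in the context, assume A·B divides 2·(A'·B·u + A·B'·v) and set w̌ = w + u + v − 2·(A'·B·u + A·B'·v)/(A·B). Let ℋ̌ denote the formal Laurent series over ℚ whose coefficient of q^N equals the (finite) sum Σ (−1)^{κ·m + λ·n} over all pairs (m, n) ∈ ℤ² satisfying A·M·m(m−1)/2 + (A−A')·M·m + B·M·n(n−1)/2 + (B−B')·M·n + u·m + v·n + w̌ = N. Set d* = gcd(u, v, M), d = gcd(u, v), d_u = gcd(u, M), d_v = gcd(v, M); assume (u, v) ≠ (0, 0) and that d* divides w. Let K be an integer such that M/d* divides K − 1 and d/gcd(u, v, w) divides K. Assume further: d*·A·B divides 2·(A'·B·u + A·B'·v); d_u·(A·v² + B·u²) divides A·v·d·M; d_v·(A·v² + B·u²) divides B·u·d·M; A·(A·v² + B·u²) divides B·(A − 2A')·u² + A·(B − 2B')·u·v + 2·A·B·u·w·K; and B·(A·v² + B·u²) divides B·(A − 2A')·u·v + A·(B − 2B')·v² + 2·A·B·v·w·K. Set ε = −κ·(B·(A − 2A')·u² + A·(B − 2B')·u·v + 2·A·B·u·w·K)/(A·(A·v² + B·u²)) − λ·(B·(A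 − 2A')·u·v + A·(B − 2B')·v² + 2·A·B·v·w·K)/(B·(A·v² + B·u²)). Then H_M(ℋ) = (−1)^ε · H_M(ℋ̌). -/

import Mathlib

noncomputable section

open scoped Classical

namespace ThetaVanish

/-- A subset of `ℤ` that is bounded below is partially well-ordered. -/
theorem isPWO_of_subset_Ici {a : ℤ} {s : Set ℤ} (h : s ⊆ Set.Ici a) : s.IsPWO := by
  have hWF : s.IsWF := by
    rw [Set.isWF_iff_no_descending_seq]
    intro f hf hmem
    have key : ∀ n : ℕ, f n + n ≤ f 0 := by
      intro n
      induction n with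
      | zero => simp
      | succ k ih =>
        have h2 : f (k + 1) < f k := hf (Nat.lt_succ_self k)
        push_cast
        push_cast at ih
        omega
    have h1 := key (f 0 - a + 1).toNat
    have h2 : a ≤ f ((f 0 - a + 1).toNat) := h (hmem _)
    have h3 : a ≤ f 0 := h (hmem 0)
    omega
  exact hWF.isPWO

theorem quad_bound (P cm m c1 : ℤ) (hP : 1 ≤ P) (h2 : m * (m - 1) = 2 * c1) :
    -(2 * cm - 1) ^ 2 ≤ P * c1 + cm * m := by
  have h0 : 0 ≤ c1 := by
    rcases le_or_gt 1 m with h | h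
    · nlinarith
    · nlinarith
  nlinarith [sq_nonneg (2 * m + 2 * cm - 1), sq_nonneg (2 * cm - 1),
    mul_nonneg (show (0:ℤ) ≤ P - 1 by omega) h0]

/-- The coefficient of `q^N` in the double theta-type series `ℋ`:
the (finite) sum of `(-1)^{κ m + λ n}` over all pairs `(m, n) ∈ ℤ²` with
`A·M·m(m-1)/2 + A'·M·m + B·M·n(n-1)/2 + B'·M·n + u·m + v·n + w = N`. -/
def HHcoeff (M A B A' B' u v w : ℤ) (κ lam : ℕ) : ℤ → ℚ := fun N =>
  ∑ᶠ p : ℤ × ℤ,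
    if A * M * (p.1 * (p.1 - 1) / 2) + A' * M * p.1 + B * M * (p.2 * (p.2 - 1) / 2)
        + B' * M * p.2 + u * p.1 + v * p.2 + w = N
    then (-1 : ℚ) ^ ((κ : ℤ) * p.1 + (lam : ℤ) * p.2) else 0

theorem HHcoeff_support (M A B A' B' u v w : ℤ) (κ lam : ℕ)
    (hM : 0 < M) (hA : 0 < A) (hB : 0 < B) :
    Function.support (HHcoeff M A B A' B' u v w κ lam) ⊆
      Set.Ici (w - (2 * (A' * M + u) - 1) ^ 2 - (2 * (B' * M + v) - 1) ^ 2) := by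
  intro N hN
  simp only [Function.mem_support, ne_eq] at hN
  rw [Set.mem_Ici]
  by_contra hcon
  push_neg at hcon
  apply hN
  apply finsum_eq_zero_of_forall_eq_zero
  rintro ⟨m, n⟩
  rw [if_neg]
  intro hQ
  simp only at hQ
  obtain ⟨c, hc⟩ := Int.even_mul_pred_self m
  obtain ⟨e, he⟩ := Int.even_mul_pred_self n
  have hc' : m * (m - 1) = 2 * c := by omega
  have he' : n * (n - 1) = 2 * e := by omega
  have e1 : m * (m - 1) / 2 = c := by omega
  have e2 : n * (n - 1) / 2 = e := by omega
  rw [e1, e2] at hQ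
  have hb1 : -(2 * (A' * M + u) - 1) ^ 2 ≤ (A * M) * c + (A' * M + u) * m :=
    quad_bound (A * M) (A' * M + u) m c (by nlinarith) hc'
  have hb2 : -(2 * (B' * M + v) - 1) ^ 2 ≤ (B * M) * e + (B' * M + v) * n :=
    quad_bound (B * M) (B' * M + v) n e (by nlinarith) he'
  nlinarith [hb1, hb2]

/-- The double theta-type series `ℋ` determined by the data
`M, A, B, A', B', u, v, w, κ, λ` (junk value `0` unless `M, A, B ≥ 1`). -/
def HH (M A B A' B' u v w : ℤ) (κ lam : ℕ) : LaurentSeries ℚ :=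
  if h : 0 < M ∧ 0 < A ∧ 0 < B then
    { coeff := HHcoeff M A B A' B' u v w κ lam
      isPWO_support' :=
        isPWO_of_subset_Ici (HHcoeff_support M A B A' B' u v w κ lam h.1 h.2.1 h.2.2) }
  else 0

/-- The huffing operator `H_M`. -/
def huff (M : ℤ) (G : LaurentSeries ℚ) : LaurentSeries ℚ where
  coeff N := if M ∣ N then G.coeff N else 0
  isPWO_support' := by
    apply Set.IsPWO.mono G.isPWO_support
    intro N hN
    simp only [Function.mem_support, ne_eq] at hN
    rw [HahnSeries.mem_support]
    by_cases hd : M ∣ N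
    · rwa [if_pos hd] at hN
    · exact absurd (if_neg hd) hN

/-!
Completing the square, `8ABM` times the exponent of `q` attached to `(m, n)` is
`B X² + A Y²` up to a constant, where `X = 2AMm + 2u + (2A' - A)M` and
`Y = 2BMn + 2v + (2B' - B)M`; passing to `ℋ̌` (`A', B' ↦ A - A', B - B'`) changes the signs of
`(2A' - A)M` and `(2B' - B)M`. With `G = Av² + Bu²` and `L = BuX + AvY`, the map
`(X, Y) ↦ (2uL/G - X, 2vL/G - Y)` is minus the reflection orthogonal to `(u, v)` for the form
`BX² + AY²`, hence preserves it; on `(m, n)` it is `reflect`, and it matches the exponents of `ℋ`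
with those of `ℋ̌`, the change of constants being absorbed by `w̌`.
For exponents divisible by `M` the hypotheses make `reflect` integral: the conditions on `K`
give `lcm(d, M) ∣ um + vn + wK`. They also determine the parity of the reflected point, which
produces the sign `(-1)^ε`.
-/

def solutions (M A B A' B' u v w N : ℤ) : Set (ℤ × ℤ) :=
  {p | A * M * (p.1 * (p.1 - 1) / 2) + A' * M * p.1 + B * M * (p.2 * (p.2 - 1) / 2)
    + B' * M * p.2 + u * p.1 + v * p.2 + w = N}

def thetaSign (κ lam : ℕ) (p : ℤ × ℤ) : ℚ := (-1 : ℚ) ^ ((κ : ℤ) * p.1 + (lam : ℤ) * p.2)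

theorem HHcoeff_eq_finsum_mem (M A B A' B' u v w : ℤ) (κ lam : ℕ) (N : ℤ) :
    HHcoeff M A B A' B' u v w κ lam N
      = ∑ᶠ p ∈ solutions M A B A' B' u v w N, thetaSign κ lam p := by
  simp only [HHcoeff, solutions, Set.mem_ofPred_eq, thetaSign, finsum_eq_if]

theorem HH_coeff {M A B A' B' u v w : ℤ} {κ lam : ℕ} (hM : 0 < M) (hA : 0 < A) (hB : 0 < B) :
    (HH M A B A' B' u v w κ lam).coeff = HHcoeff M A B A' B' u v w κ lam := by
  rw [HH, dif_pos ⟨hM, hA, hB⟩]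

theorem two_mul_ediv_two_mul_pred (m : ℤ) : 2 * (m * (m - 1) / 2) = m * (m - 1) :=
  Int.mul_ediv_cancel' (Int.even_mul_pred_self m).two_dvd

theorem dvd_of_mem_solutions {M A B A' B' u v w N : ℤ} {p : ℤ × ℤ}
    (hp : p ∈ solutions M A B A' B' u v w N) (hN : M ∣ N) : M ∣ u * p.1 + v * p.2 + w := by
  have h : u * p.1 + v * p.2 + w = N - M * (A * (p.1 * (p.1 - 1) / 2) + A' * p.1
      + B * (p.2 * (p.2 - 1) / 2) + B' * p.2) := by
    rw [← hp]; ring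
  exact h ▸ dvd_sub hN (dvd_mul_right _ _)

-- With `X`, `Y`, `L`, `G` as above, `L = ABM · reflectNum u v P (m, n) + 2G`.
def reflectNum (u v P : ℤ) (p : ℤ × ℤ) : ℤ := 2 * (u * p.1 + v * p.2) + P - u - v

def reflect (A B u v P : ℤ) (p : ℤ × ℤ) : ℤ × ℤ :=
  (B * u * reflectNum u v P p / (A * v ^ 2 + B * u ^ 2) - p.1,
    A * v * reflectNum u v P p / (A * v ^ 2 + B * u ^ 2) - p.2)

section Reflection

variable {A B u v P : ℤ} {p : ℤ × ℤ}

theorem reflectNum_reflect (hG : A * v ^ 2 + B * u ^ 2 ≠ 0)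
    (h₁ : A * v ^ 2 + B * u ^ 2 ∣ B * u * reflectNum u v P p)
    (h₂ : A * v ^ 2 + B * u ^ 2 ∣ A * v * reflectNum u v P p) :
    reflectNum u v (2 * (u + v) - P) (reflect A B u v P p) = reflectNum u v P p := by
  obtain ⟨q₁, hq₁⟩ := h₁
  obtain ⟨q₂, hq₂⟩ := h₂
  simp only [reflect, hq₁, hq₂, Int.mul_ediv_cancel_left _ hG]
  apply mul_left_cancel₀ hG
  simp only [reflectNum] at hq₁ hq₂ ⊢
  linear_combination -2 * u * hq₁ - 2 * v * hq₂

theorem reflect_reflect (hG : A * v ^ 2 + B * u ^ 2 ≠ 0)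
    (h₁ : A * v ^ 2 + B * u ^ 2 ∣ B * u * reflectNum u v P p)
    (h₂ : A * v ^ 2 + B * u ^ 2 ∣ A * v * reflectNum u v P p) :
    reflect A B u v (2 * (u + v) - P) (reflect A B u v P p) = p := by
  have hZ := reflectNum_reflect hG h₁ h₂
  obtain ⟨q₁, hq₁⟩ := h₁
  obtain ⟨q₂, hq₂⟩ := h₂
  rw [reflect, hZ]
  simp only [reflect, hq₁, hq₂, Int.mul_ediv_cancel_left _ hG, sub_sub_cancel]

end Reflection

theorem form_eq_of_reflect {A B u v X Y X' Y' : ℤ} (hG : A * v ^ 2 + B * u ^ 2 ≠ 0)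
    (hX : (A * v ^ 2 + B * u ^ 2) * X'
      = 2 * u * (B * u * X + A * v * Y) - (A * v ^ 2 + B * u ^ 2) * X)
    (hY : (A * v ^ 2 + B * u ^ 2) * Y'
      = 2 * v * (B * u * X + A * v * Y) - (A * v ^ 2 + B * u ^ 2) * Y) :
    B * X' ^ 2 + A * Y' ^ 2 = B * X ^ 2 + A * Y ^ 2 := by
  apply mul_left_cancel₀ (pow_ne_zero 2 hG)
  linear_combination
    B * ((A * v ^ 2 + B * u ^ 2) * X' + 2 * u * (B * u * X + A * v * Y)
      - (A * v ^ 2 + B * u ^ 2) * X) * hX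
    + A * ((A * v ^ 2 + B * u ^ 2) * Y' + 2 * v * (B * u * X + A * v * Y)
      - (A * v ^ 2 + B * u ^ 2) * Y) * hY

theorem form_pos {A B u v : ℤ} (hA : 0 < A) (hB : 0 < B) (huv : (u, v) ≠ (0, 0)) :
    0 < A * v ^ 2 + B * u ^ 2 := by
  rcases eq_or_ne u 0 with rfl | hu
  · have hv : v ≠ 0 := fun h => huv (by rw [h])
    positivity
  · positivity

theorem eight_mul_eq_sq_sub_sq (a c M u m : ℤ) :
    8 * a * M * (a * M * (m * (m - 1) / 2) + c * M * m + u * m)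
      = (2 * a * M * m + 2 * c * M + 2 * u - a * M) ^ 2 - (2 * c * M + 2 * u - a * M) ^ 2 := by
  linear_combination 4 * a ^ 2 * M ^ 2 * two_mul_ediv_two_mul_pred m

theorem reflect_mem_solutions {M A B A' B' u v w P N : ℤ} {p : ℤ × ℤ}
    (hABM : A * B * M ≠ 0) (hG : A * v ^ 2 + B * u ^ 2 ≠ 0)
    (hP : A * B * P = 2 * (A' * B * u + A * B' * v))
    (h₁ : A * v ^ 2 + B * u ^ 2 ∣ B * u * reflectNum u v P p)
    (h₂ : A * v ^ 2 + B * u ^ 2 ∣ A * v * reflectNum u v P p)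
    (hp : p ∈ solutions M A B A' B' u v w N) :
    reflect A B u v P p ∈ solutions M A B (A - A') (B - B') u v (w + u + v - P) N := by
  obtain ⟨q₁, hq₁⟩ := h₁
  obtain ⟨q₂, hq₂⟩ := h₂
  obtain ⟨m, n⟩ := p
  simp only [solutions, Set.mem_ofPred_eq, reflect, hq₁, hq₂, Int.mul_ediv_cancel_left _ hG]
    at hp ⊢
  simp only [reflectNum] at hq₁ hq₂
  have hform := form_eq_of_reflect hG
    (X := 2 * A * M * m + 2 * A' * M + 2 * u - A * M)
    (Y := 2 * B * M * n + 2 * B' * M + 2 * v - B * M)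
    (X' := 2 * A * M * (q₁ - m) + 2 * (A - A') * M + 2 * u - A * M)
    (Y' := 2 * B * M * (q₂ - n) + 2 * (B - B') * M + 2 * v - B * M)
    (by linear_combination -2 * A * M * hq₁ + 2 * u * M * hP)
    (by linear_combination -2 * B * M * hq₂ + 2 * v * M * hP)
  apply mul_left_cancel₀ (mul_ne_zero (by norm_num : (8 : ℤ) ≠ 0) hABM)
  linear_combination B * eight_mul_eq_sq_sub_sq A (A - A') M u (q₁ - m)
    + A * eight_mul_eq_sq_sub_sq B (B - B') M v (q₂ - n)
    - B * eight_mul_eq_sq_sub_sq A A' M u m - A * eight_mul_eq_sq_sub_sq B B' M v n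
    + hform + 8 * A * B * M * hp - 8 * M * hP

theorem neg_one_zpow_add_two_mul {α : Type*} [DivisionRing α] (a k : ℤ) :
    (-1 : α) ^ (a + 2 * k) = (-1 : α) ^ a := by
  rw [zpow_add₀ (by norm_num), zpow_mul]
  norm_num

theorem thetaSign_eq_mul_thetaSign_reflect {A B u v P X E e₁ e₂ : ℤ} (κ lam : ℕ)
    {p : ℤ × ℤ} (hG : A * v ^ 2 + B * u ^ 2 ≠ 0)
    (hX₁ : A * v ^ 2 + B * u ^ 2 ∣ B * u * X) (hX₂ : A * v ^ 2 + B * u ^ 2 ∣ A * v * X)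
    (he₁ : (A * v ^ 2 + B * u ^ 2) * e₁ = B * u * E)
    (he₂ : (A * v ^ 2 + B * u ^ 2) * e₂ = A * v * E)
    (hZ : reflectNum u v P p = 2 * X - E) :
    thetaSign κ lam p
      = (-1) ^ (-κ * e₁ - lam * e₂) * thetaSign κ lam (reflect A B u v P p) := by
  obtain ⟨x₁, hx₁⟩ := hX₁
  obtain ⟨x₂, hx₂⟩ := hX₂
  have hq₁ : B * u * reflectNum u v P p = (A * v ^ 2 + B * u ^ 2) * (2 * x₁ - e₁) := by
    rw [hZ]; linear_combination 2 * hx₁ + he₁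
  have hq₂ : A * v * reflectNum u v P p = (A * v ^ 2 + B * u ^ 2) * (2 * x₂ - e₂) := by
    rw [hZ]; linear_combination 2 * hx₂ + he₂
  simp only [thetaSign, reflect, hq₁, hq₂, Int.mul_ediv_cancel_left _ hG]
  rw [← zpow_add₀ (by norm_num),
    ← neg_one_zpow_add_two_mul _ (κ * (x₁ - e₁ - p.1) + lam * (x₂ - e₂ - p.2))]
  congr 1
  ring

theorem HHcoeff_eq_mul_HHcoeff_reflect {M A B A' B' u v w P N : ℤ} (κ lam : ℕ) (c : ℚ)
    (hABM : A * B * M ≠ 0) (hG : A * v ^ 2 + B * u ^ 2 ≠ 0)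
    (hP : A * B * P = 2 * (A' * B * u + A * B' * v))
    (hdvd : ∀ p : ℤ × ℤ, M ∣ u * p.1 + v * p.2 + w →
      A * v ^ 2 + B * u ^ 2 ∣ B * u * reflectNum u v P p ∧
        A * v ^ 2 + B * u ^ 2 ∣ A * v * reflectNum u v P p)
    (hdvd' : ∀ p : ℤ × ℤ, M ∣ u * p.1 + v * p.2 + (w + u + v - P) →
      A * v ^ 2 + B * u ^ 2 ∣ B * u * reflectNum u v (2 * (u + v) - P) p ∧
        A * v ^ 2 + B * u ^ 2 ∣ A * v * reflectNum u v (2 * (u + v) - P) p)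
    (hsign : ∀ p : ℤ × ℤ, M ∣ u * p.1 + v * p.2 + w →
      thetaSign κ lam p = c * thetaSign κ lam (reflect A B u v P p))
    (hN : M ∣ N) :
    HHcoeff M A B A' B' u v w κ lam N
      = c * HHcoeff M A B (A - A') (B - B') u v (w + u + v - P) κ lam N := by
  have hP' : A * B * (2 * (u + v) - P) = 2 * ((A - A') * B * u + A * (B - B') * v) := by
    linear_combination -hP
  have hPP : 2 * (u + v) - (2 * (u + v) - P) = P := by ring
  have hww : w + u + v - P + u + v - (2 * (u + v) - P) = w := by ring
  rw [HHcoeff_eq_finsum_mem, HHcoeff_eq_finsum_mem, mul_finsum_mem]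
  refine finsum_mem_eq_of_bijOn _ (Set.InvOn.bijOn (f' := reflect A B u v (2 * (u + v) - P))
    ⟨fun p hp => ?_, fun p hp => ?_⟩ (fun p hp => ?_) (fun p hp => ?_))
    (fun p hp => hsign p (dvd_of_mem_solutions hp hN))
  · obtain ⟨h₁, h₂⟩ := hdvd p (dvd_of_mem_solutions hp hN)
    exact reflect_reflect hG h₁ h₂
  · obtain ⟨h₁, h₂⟩ := hdvd' p (dvd_of_mem_solutions hp hN)
    simpa only [hPP] using reflect_reflect hG h₁ h₂
  · obtain ⟨h₁, h₂⟩ := hdvd p (dvd_of_mem_solutions hp hN)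
    exact reflect_mem_solutions hABM hG hP h₁ h₂ hp
  · obtain ⟨h₁, h₂⟩ := hdvd' p (dvd_of_mem_solutions hp hN)
    simpa only [sub_sub_cancel, hww] using reflect_mem_solutions hABM hG hP' h₁ h₂ hp

theorem huff_HH_eq_of_coeff {M A B A' B' A'' B'' u v w w' : ℤ} (κ lam : ℕ) (e : ℤ)
    (hM : 0 < M) (hA : 0 < A) (hB : 0 < B)
    (h : ∀ N, M ∣ N →
      HHcoeff M A B A' B' u v w κ lam N = (-1) ^ e * HHcoeff M A B A'' B'' u v w' κ lam N) :
    huff M (HH M A B A' B' u v w κ lam)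
      = (-1) ^ e * huff M (HH M A B A'' B'' u v w' κ lam) := by
  have hC : (-1 : LaurentSeries ℚ) ^ e = HahnSeries.C ((-1 : ℚ) ^ e) := by
    rw [map_zpow₀, map_neg, map_one]
  ext N
  rw [hC, HahnSeries.C_mul_eq_smul, HahnSeries.coeff_smul, smul_eq_mul]
  simp only [huff, HH_coeff hM hA hB]
  split_ifs with hN
  · exact h N hN
  · rw [mul_zero]

theorem dvd_mul_of_gcd_mul_dvd {G c d M x : ℤ} (h : (Int.gcd d M : ℤ) * G ∣ c * d * M)
    (hd : d ∣ x) (hM : M ∣ x) : G ∣ c * x := by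
  rcases eq_or_ne (Int.gcd d M : ℤ) 0 with h0 | h0
  · obtain rfl : d = 0 := (Int.gcd_eq_zero_iff.mp (by exact_mod_cast h0)).1
    rw [zero_dvd_iff.mp hd, mul_zero]
    exact dvd_zero G
  have hdM : d * M ∣ (Int.gcd d M : ℤ) * x := calc
    d * M ∣ ((d * M).natAbs : ℤ) := Int.dvd_natAbs.mpr dvd_rfl
    _ = (Int.gcd d M : ℤ) * (Int.lcm d M : ℤ) := by
      rw [Int.natAbs_mul]; exact_mod_cast (Int.gcd_mul_lcm d M).symm
    _ ∣ (Int.gcd d M : ℤ) * x := mul_dvd_mul_left _ (Int.coe_lcm_dvd hd hM)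
  refine (mul_dvd_mul_iff_left h0).mp (h.trans ?_)
  calc c * d * M = c * (d * M) := mul_assoc c d M
    _ ∣ c * ((Int.gcd d M : ℤ) * x) := mul_dvd_mul_left c hdM
    _ = (Int.gcd d M : ℤ) * (c * x) := mul_left_comm _ _ _

theorem dvd_mul_of_div_gcd_dvd {d w K : ℤ} (h : d / (Int.gcd d w : ℤ) ∣ K) : d ∣ w * K :=
  calc d = (Int.gcd d w : ℤ) * (d / (Int.gcd d w : ℤ)) :=
        (Int.mul_ediv_cancel' (Int.gcd_dvd_left d w)).symm
    _ ∣ w * K := mul_dvd_mul (Int.gcd_dvd_right d w) h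

theorem dvd_of_dvd_mul_of_form_dvd {A B u v d E : ℤ} (hdu : d ∣ u) (hdv : d ∣ v)
    (hG : A * v ^ 2 + B * u ^ 2 ≠ 0) (h₁ : A * v ^ 2 + B * u ^ 2 ∣ B * u * E)
    (h₂ : A * v ^ 2 + B * u ^ 2 ∣ A * v * E) : d ∣ E := by
  obtain ⟨u₁, rfl⟩ := hdu
  obtain ⟨v₁, rfl⟩ := hdv
  have hd : d ≠ 0 := by rintro rfl; simp at hG
  have hG₁ : A * v₁ ^ 2 + B * u₁ ^ 2 ≠ 0 := by rintro h; apply hG; linear_combination d ^ 2 * h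
  have hform : A * (d * v₁) ^ 2 + B * (d * u₁) ^ 2 = d * (d * (A * v₁ ^ 2 + B * u₁ ^ 2)) := by
    ring
  rw [hform, show B * (d * u₁) * E = d * (B * u₁ * E) by ring] at h₁
  rw [hform, show A * (d * v₁) * E = d * (A * v₁ * E) by ring] at h₂
  have e₁ := (mul_dvd_mul_iff_left hd).mp h₁
  have e₂ := (mul_dvd_mul_iff_left hd).mp h₂
  have e₃ : d * (A * v₁ ^ 2 + B * u₁ ^ 2) ∣ (A * v₁ ^ 2 + B * u₁ ^ 2) * E := by
    rw [show (A * v₁ ^ 2 + B * u₁ ^ 2) * E = u₁ * (B * u₁ * E) + v₁ * (A * v₁ * E) by ring]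
    exact dvd_add (e₁.mul_left u₁) (e₂.mul_left v₁)
  rw [mul_comm d] at e₃
  exact (mul_dvd_mul_iff_left hG₁).mp e₃

theorem dvd_mul_add_mul_of_dvd_add {G c d M K w S : ℤ}
    (hc : (Int.gcd d M : ℤ) * G ∣ c * d * M) (hw : (Int.gcd d M : ℤ) ∣ w)
    (hK : M / (Int.gcd d M : ℤ) ∣ K - 1) (hdS : d ∣ S) (hdwK : d ∣ w * K) (hS : M ∣ S + w) :
    G ∣ c * (S + w * K) := by
  refine dvd_mul_of_gcd_mul_dvd hc (dvd_add hdS hdwK) ?_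
  have hMw : M ∣ w * (K - 1) :=
    Int.mul_ediv_cancel' (Int.gcd_dvd_right d M) ▸ mul_dvd_mul hw hK
  rw [show S + w * K = S + w + w * (K - 1) by ring]
  exact dvd_add hS hMw

theorem dvd_mul_reflectNum {G c d M K u v w P : ℤ} {p : ℤ × ℤ}
    (hc : (Int.gcd d M : ℤ) * G ∣ c * d * M) (hw : (Int.gcd d M : ℤ) ∣ w)
    (hK : M / (Int.gcd d M : ℤ) ∣ K - 1) (hdu : d ∣ u) (hdv : d ∣ v) (hdwK : d ∣ w * K)
    (hE : G ∣ c * (u + v - P + 2 * w * K)) (hp : M ∣ u * p.1 + v * p.2 + w) :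
    G ∣ c * reflectNum u v P p := by
  have hX := dvd_mul_add_mul_of_dvd_add hc hw hK
    (dvd_add (hdu.mul_right p.1) (hdv.mul_right p.2)) hdwK hp
  rw [show c * reflectNum u v P p
      = 2 * (c * (u * p.1 + v * p.2 + w * K)) - c * (u + v - P + 2 * w * K) by
    unfold reflectNum; ring]
  exact dvd_sub (hX.mul_left 2) hE

theorem dvd_mul_reflectNum_check {G c d M K u v w P : ℤ} {p : ℤ × ℤ}
    (hc : (Int.gcd d M : ℤ) * G ∣ c * d * M) (hw : (Int.gcd d M : ℤ) ∣ w)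
    (hK : M / (Int.gcd d M : ℤ) ∣ K - 1) (hdu : d ∣ u) (hdv : d ∣ v) (hdwK : d ∣ w * K)
    (hdy : d ∣ u + v - P) (hE : G ∣ c * (u + v - P + 2 * w * K))
    (hp : M ∣ u * p.1 + v * p.2 + (w + u + v - P)) :
    G ∣ c * reflectNum u v (2 * (u + v) - P) p := by
  have hgy : (Int.gcd d M : ℤ) ∣ u + v - P := (Int.gcd_dvd_left d M).trans hdy
  rw [show w + u + v - P = w + (u + v - P) by ring] at hp
  have hX := dvd_mul_add_mul_of_dvd_add hc (hw.add hgy) hK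
    (dvd_add (hdu.mul_right p.1) (hdv.mul_right p.2))
    (by rw [add_mul]; exact dvd_add hdwK (hdy.mul_right K)) hp
  -- `S = -(u + v - P)` solves `M ∣ S + (u + v - P)`, giving `G ∣ c * ((K - 1) * (u + v - P))`.
  have hY := dvd_mul_add_mul_of_dvd_add hc hgy hK hdy.neg_right (hdy.mul_right K)
    (by rw [neg_add_cancel]; exact dvd_zero M)
  rw [show c * reflectNum u v (2 * (u + v) - P) p
      = 2 * (c * (u * p.1 + v * p.2 + (w + (u + v - P)) * K)) - c * (u + v - P + 2 * w * K)
        - 2 * (c * (-(u + v - P) + (u + v - P) * K)) by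
    unfold reflectNum; ring]
  exact dvd_sub (dvd_sub (hX.mul_left 2) hE) (hY.mul_left 2)

theorem huff_HH_eq_of_dvd {M A B A' B' u v w P K d e₁ e₂ : ℤ} (κ lam : ℕ)
    (hM : 0 < M) (hA : 0 < A) (hB : 0 < B) (hG : A * v ^ 2 + B * u ^ 2 ≠ 0)
    (hP : A * B * P = 2 * (A' * B * u + A * B' * v)) (hdu : d ∣ u) (hdv : d ∣ v)
    (hBu : (Int.gcd d M : ℤ) * (A * v ^ 2 + B * u ^ 2) ∣ B * u * d * M)
    (hAv : (Int.gcd d M : ℤ) * (A * v ^ 2 + B * u ^ 2) ∣ A * v * d * M)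
    (hw : (Int.gcd d M : ℤ) ∣ w) (hK : M / (Int.gcd d M : ℤ) ∣ K - 1) (hdwK : d ∣ w * K)
    (he₁ : (A * v ^ 2 + B * u ^ 2) * e₁ = B * u * (u + v - P + 2 * w * K))
    (he₂ : (A * v ^ 2 + B * u ^ 2) * e₂ = A * v * (u + v - P + 2 * w * K)) :
    huff M (HH M A B A' B' u v w κ lam) = (-1) ^ (-κ * e₁ - lam * e₂)
      * huff M (HH M A B (A - A') (B - B') u v (w + u + v - P) κ lam) := by
  have hE₁ := Dvd.intro e₁ he₁
  have hE₂ := Dvd.intro e₂ he₂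
  have hdy : d ∣ u + v - P := by
    have hdE := dvd_of_dvd_mul_of_form_dvd hdu hdv hG hE₁ hE₂
    simpa [mul_assoc] using dvd_sub hdE (hdwK.mul_left 2)
  refine huff_HH_eq_of_coeff κ lam _ hM hA hB fun N hN =>
    HHcoeff_eq_mul_HHcoeff_reflect κ lam _ (by positivity) hG hP (fun p hp => ?_)
      (fun p hp => ?_) (fun p hp => ?_) hN
  · exact ⟨dvd_mul_reflectNum hBu hw hK hdu hdv hdwK hE₁ hp,
      dvd_mul_reflectNum hAv hw hK hdu hdv hdwK hE₂ hp⟩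
  · exact ⟨dvd_mul_reflectNum_check hBu hw hK hdu hdv hdwK hdy hE₁ hp,
      dvd_mul_reflectNum_check hAv hw hK hdu hdv hdwK hdy hE₂ hp⟩
  · have hdS := dvd_add (hdu.mul_right p.1) (hdv.mul_right p.2)
    exact thetaSign_eq_mul_thetaSign_reflect κ lam hG
      (dvd_mul_add_mul_of_dvd_add hBu hw hK hdS hdwK hp)
      (dvd_mul_add_mul_of_dvd_add hAv hw hK hdS hdwK hp) he₁ he₂
      (by unfold reflectNum; ring)

theorem statement19_general (M A B A' B' u v w : ℤ) (hM : 1 ≤ M) (hA : 1 ≤ A) (hB : 1 ≤ B)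
    (κ lam : ℕ)
    (hABdvd : A * B ∣ 2 * (A' * B * u + A * B' * v))
    (wcheck : ℤ) (hwcheck : wcheck = w + u + v - 2 * (A' * B * u + A * B' * v) / (A * B))
    (dstar d du dv : ℤ)
    (hdstar : dstar = (Int.gcd (Int.gcd u v : ℤ) M : ℤ))
    (hd : d = (Int.gcd u v : ℤ))
    (hdu : du = (Int.gcd u M : ℤ)) (hdv : dv = (Int.gcd v M : ℤ))
    (huv : (u, v) ≠ (0, 0))
    (hw : dstar ∣ w)
    (K : ℤ) (hK1 : M / dstar ∣ K - 1)
    (hK2 : d / (Int.gcd (Int.gcd u v : ℤ) w : ℤ) ∣ K)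
    (c2 : du * (A * v ^ 2 + B * u ^ 2) ∣ A * v * d * M)
    (c3 : dv * (A * v ^ 2 + B * u ^ 2) ∣ B * u * d * M)
    (c4 : A * (A * v ^ 2 + B * u ^ 2) ∣
      B * (A - 2 * A') * u ^ 2 + A * (B - 2 * B') * u * v + 2 * A * B * u * w * K)
    (c5 : B * (A * v ^ 2 + B * u ^ 2) ∣
      B * (A - 2 * A') * u * v + A * (B - 2 * B') * v ^ 2 + 2 * A * B * v * w * K)
    (eps : ℤ)
    (heps : eps =
      -(κ : ℤ) * ((B * (A - 2 * A') * u ^ 2 + A * (B - 2 * B') * u * v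
            + 2 * A * B * u * w * K)
          / (A * (A * v ^ 2 + B * u ^ 2)))
      - (lam : ℤ) * ((B * (A - 2 * A') * u * v + A * (B - 2 * B') * v ^ 2
            + 2 * A * B * v * w * K)
          / (B * (A * v ^ 2 + B * u ^ 2)))) :
    huff M (HH M A B A' B' u v w κ lam) =
      (-1 : LaurentSeries ℚ) ^ eps
        * huff M (HH M A B (A - A') (B - B') u v wcheck κ lam) := by
  obtain ⟨P, hP⟩ := hABdvd
  have hG : 0 < A * v ^ 2 + B * u ^ 2 := form_pos (by omega) (by omega) huv
  have hdu' : d ∣ u := hd ▸ Int.gcd_dvd_left u v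
  have hdv' : d ∣ v := hd ▸ Int.gcd_dvd_right u v
  rw [← hd] at hdstar hK2
  subst hdstar hdu hdv
  have hgu := (Int.gcd_dvd_left d M).trans hdu'
  have hgv := (Int.gcd_dvd_left d M).trans hdv'
  have hAv := (mul_dvd_mul_right (Int.dvd_coe_gcd hgu (Int.gcd_dvd_right d M)) _).trans c2
  have hBu := (mul_dvd_mul_right (Int.dvd_coe_gcd hgv (Int.gcd_dvd_right d M)) _).trans c3
  have hnum₁ : B * (A - 2 * A') * u ^ 2 + A * (B - 2 * B') * u * v + 2 * A * B * u * w * K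
      = A * (B * u * (u + v - P + 2 * w * K)) := by linear_combination -u * hP
  have hnum₂ : B * (A - 2 * A') * u * v + A * (B - 2 * B') * v ^ 2 + 2 * A * B * v * w * K
      = B * (A * v * (u + v - P + 2 * w * K)) := by linear_combination -v * hP
  rw [hnum₁] at c4 heps
  rw [hnum₂] at c5 heps
  obtain ⟨e₁, he₁⟩ := (mul_dvd_mul_iff_left (by positivity)).mp c4
  obtain ⟨e₂, he₂⟩ := (mul_dvd_mul_iff_left (by positivity)).mp c5
  rw [he₁, he₂, ← mul_assoc, ← mul_assoc, Int.mul_ediv_cancel_left _ (by positivity),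
    Int.mul_ediv_cancel_left _ (by positivity)] at heps
  rw [hwcheck, hP, Int.mul_ediv_cancel_left _ (by positivity), heps]
  exact huff_HH_eq_of_dvd κ lam (by omega) (by omega) (by omega) hG.ne' hP.symm hdu' hdv' hBu hAv
    hw hK1 (dvd_mul_of_div_gcd_dvd hK2) he₁.symm he₂.symm

/-- **Theorem (the second cancelation)**: `H_M(ℋ) = (-1)^ε · H_M(ℋ̌)`. -/
theorem statement19 (M A B A' B' u v w : ℤ) (hM : 1 ≤ M) (hA : 1 ≤ A) (hB : 1 ≤ B)
    (κ lam : ℕ) (hκ : κ = 0 ∨ κ = 1) (hlam : lam = 0 ∨ lam = 1)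
    (hABdvd : A * B ∣ 2 * (A' * B * u + A * B' * v))
    (wcheck : ℤ) (hwcheck : wcheck = w + u + v - 2 * (A' * B * u + A * B' * v) / (A * B))
    (dstar d du dv : ℤ)
    (hdstar : dstar = (Int.gcd (Int.gcd u v : ℤ) M : ℤ))
    (hd : d = (Int.gcd u v : ℤ))
    (hdu : du = (Int.gcd u M : ℤ)) (hdv : dv = (Int.gcd v M : ℤ))
    (huv : (u, v) ≠ (0, 0))
    (hw : dstar ∣ w)
    (K : ℤ) (hK1 : M / dstar ∣ K - 1)
    (hK2 : d / (Int.gcd (Int.gcd u v : ℤ) w : ℤ) ∣ K)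
    (c1 : dstar * A * B ∣ 2 * (A' * B * u + A * B' * v))
    (c2 : du * (A * v ^ 2 + B * u ^ 2) ∣ A * v * d * M)
    (c3 : dv * (A * v ^ 2 + B * u ^ 2) ∣ B * u * d * M)
    (c4 : A * (A * v ^ 2 + B * u ^ 2) ∣
      B * (A - 2 * A') * u ^ 2 + A * (B - 2 * B') * u * v + 2 * A * B * u * w * K)
    (c5 : B * (A * v ^ 2 + B * u ^ 2) ∣
      B * (A - 2 * A') * u * v + A * (B - 2 * B') * v ^ 2 + 2 * A * B * v * w * K)
    (eps : ℤ)
    (heps : eps =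
      -(κ : ℤ) * ((B * (A - 2 * A') * u ^ 2 + A * (B - 2 * B') * u * v
            + 2 * A * B * u * w * K)
          / (A * (A * v ^ 2 + B * u ^ 2)))
      - (lam : ℤ) * ((B * (A - 2 * A') * u * v + A * (B - 2 * B') * v ^ 2
            + 2 * A * B * v * w * K)
          / (B * (A * v ^ 2 + B * u ^ 2)))) :
    huff M (HH M A B A' B' u v w κ lam) =
      (-1 : LaurentSeries ℚ) ^ eps
        * huff M (HH M A B (A - A') (B - B') u v wcheck κ lam) :=
  statement19_general M A B A' B' u v w hM hA hB κ lam hABdvd wcheck hwcheck dstar d du dv hdstar hd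
    hdu hdv huv hw K hK1 hK2 c2 c3 c4 c5 eps heps

end ThetaVanish
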